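/- arXiv:2512.06804 — 4 statements merged into one kernel-verified Lean document; each statement's English description precedes it below -/
import Mathlib

section
/- (Theorem 2: equivalence of TWFE panel estimator and functional DiD estimator.) Assume Σ_{i=1}^n Ḋ_i² ≠ 0. Then the (T−1)×(T−1) Gram matrix G with entries G_{s,s'} = (1/(nT)) Σ_{i,t} D̈_{i,t,s} D̈_{i,t,s'} (s, s' ranging over time indices ≠ r) is invertible, and the TWFE estimator β̂^PD = G⁻¹ g, where g_s = (1/(nT)) Σ_{i,t} D̈_{i,t,s} Ÿ_{i,t}, satisfies, for every s ≠ r, β̂^PD_s = (Σ_{i=1}^n Ḋ_i²)⁻¹ · Σ_{i=1}^n Ḋ_i (Ẏ_{i,s} − Ẏ_{i,r}); i.e., the panel TWFE estimator coincides pointwise with the functional DiD estimator. -/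
open Finset Matrix

/-- Two-way (unit and time) demeaning of an array `A : Fin n → Fin T → ℝ`. -/
noncomputable def twoWayDemean {n T : ℕ} (A : Fin n → Fin T → ℝ) (i : Fin n) (t : Fin T) : ℝ :=
  A i t - (∑ s, A i s) / T - (∑ j, A j t) / n + (∑ j, ∑ s, A j s) / (n * T)

/-- The event-time regressor `D_{i,t,s} = D_i · 1{t = s}`. -/
noncomputable def eventReg {n T : ℕ} (D : Fin n → ℝ) (s : Fin T) (i : Fin n) (t : Fin T) : ℝ :=
  D i * (if t = s then 1 else 0)

lemma demean_eventReg {n T : ℕ} (D : Fin n → ℝ) (s : Fin T) (i : Fin n) (t : Fin T) :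
    twoWayDemean (eventReg D s) i t
      = (D i - (∑ j, D j) / n) * ((if t = s then 1 else 0) - 1 / T) := by
  unfold twoWayDemean eventReg
  simp only [Finset.sum_ite_eq', Finset.mem_univ, if_true, ← Finset.sum_mul, div_div,
    mul_ite, mul_one, mul_zero, ite_mul, zero_mul, one_mul, Finset.sum_const_zero]
  split_ifs <;> simp <;> ring

lemma rowsum_demean {n T : ℕ} (hn : (n:ℝ) ≠ 0) (hT : (T:ℝ) ≠ 0)
    (Y : Fin n → Fin T → ℝ) (i : Fin n) :
    ∑ t, twoWayDemean Y i t = 0 := by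
  unfold twoWayDemean
  rw [Finset.sum_add_distrib, Finset.sum_sub_distrib, Finset.sum_sub_distrib,
    ← Finset.sum_div, ← Finset.sum_div, Finset.sum_const, Finset.sum_const,
    Finset.sum_comm]
  simp only [Finset.card_univ, Fintype.card_fin, nsmul_eq_mul]
  field_simp
  ring

lemma sum_subtype_ne {T : ℕ} (r : Fin T) (f : Fin T → ℝ) :
    ∑ s' : {s : Fin T // s ≠ r}, f s'.1 = (∑ t, f t) - f r := by
  rw [← Finset.sum_subtype (Finset.univ.erase r) (by simp [Finset.mem_erase]) f,
    Finset.sum_erase_eq_sub (Finset.mem_univ r)]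

lemma card_ne {T : ℕ} (hT : 2 ≤ T) (r : Fin T) :
    ∑ _s' : {s : Fin T // s ≠ r}, (1:ℝ) = T - 1 := by
  have h : Fintype.card {s : Fin T // s ≠ r} = T - 1 := by
    simp [Ne, Fintype.card_subtype_compl]
  rw [Finset.sum_const, Finset.card_univ, h, nsmul_eq_mul, Nat.cast_sub (by omega)]
  simp

lemma time_sum {T : ℕ} (hT : (T:ℝ) ≠ 0) (s s' : Fin T) :
    ∑ t, ((if t = s then (1:ℝ) else 0) - 1/T) * ((if t = s' then 1 else 0) - 1/T)
      = (if s = s' then 1 else 0) - 1/T := by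
  simp only [sub_mul, mul_sub, Finset.sum_sub_distrib, ite_mul, one_mul, zero_mul,
    mul_ite, mul_one, mul_zero, Finset.sum_ite_eq', Finset.mem_univ, if_true,
    Finset.sum_const, Finset.card_univ, Fintype.card_fin, nsmul_eq_mul]
  rcases eq_or_ne s s' with h | h
  · subst h; simp; field_simp; ring
  · simp only [h, Ne.symm h, if_false]; field_simp; ring

noncomputable def Bmat {T : ℕ} (r : Fin T) (c : ℝ) :
    Matrix {s : Fin T // s ≠ r} {s : Fin T // s ≠ r} ℝ :=
  Matrix.of fun s s' => ((if s = s' then (1:ℝ) else 0) + 1) * c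

/-- **Theorem 2.** If `∑ᵢ Ḋᵢ² ≠ 0`, then the TWFE Gram matrix `G` is
invertible and the TWFE estimator `β̂^PD = G⁻¹ g` coincides, for every event time
`s ≠ r`, with the functional DiD estimator
`(∑ᵢ Ḋᵢ²)⁻¹ ∑ᵢ Ḋᵢ (Ẏ_{i,s} − Ẏ_{i,r})`. -/
theorem twfe_equals_functional_did
    {n T : ℕ} (hn : 1 ≤ n) (hT : 2 ≤ T) (r : Fin T)
    (Y : Fin n → Fin T → ℝ) (D : Fin n → ℝ)
    (G : Matrix {s : Fin T // s ≠ r} {s : Fin T // s ≠ r} ℝ)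
    (hG : ∀ s s' : {s : Fin T // s ≠ r},
      G s s' = (∑ i, ∑ t, twoWayDemean (eventReg D s.1) i t * twoWayDemean (eventReg D s'.1) i t)
        / (n * T))
    (g : {s : Fin T // s ≠ r} → ℝ)
    (hg : ∀ s : {s : Fin T // s ≠ r},
      g s = (∑ i, ∑ t, twoWayDemean (eventReg D s.1) i t * twoWayDemean Y i t) / (n * T))
    (hD : (∑ i, (D i - (∑ j, D j) / n) ^ 2) ≠ 0) :
    IsUnit G ∧
      ∀ s : {s : Fin T // s ≠ r},
        (G⁻¹ *ᵥ g) s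
          = (∑ i, (D i - (∑ j, D j) / n) ^ 2)⁻¹ *
              ∑ i, (D i - (∑ j, D j) / n) *
                ((Y i s.1 - (∑ j, Y j s.1) / n) - (Y i r - (∑ j, Y j r) / n)) := by
  have hn' : (n:ℝ) ≠ 0 := Nat.cast_ne_zero.mpr (by omega)
  have hT' : (T:ℝ) ≠ 0 := Nat.cast_ne_zero.mpr (by omega)
  set Dd : Fin n → ℝ := fun i => D i - (∑ j, D j) / n with hDd
  set SD : ℝ := ∑ i, Dd i ^ 2 with hSD
  -- G entries
  have hG' : ∀ s s' : {s : Fin T // s ≠ r},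
      G s s' = SD * ((if s = s' then (1:ℝ) else 0) - 1/T) / (n*T) := by
    intro s s'
    rw [hG]
    congr 1
    have hi : ∀ i, ∑ t, twoWayDemean (eventReg D s.1) i t * twoWayDemean (eventReg D s'.1) i t
        = Dd i ^ 2 * ((if s = s' then (1:ℝ) else 0) - 1/T) := by
      intro i
      simp only [demean_eventReg]
      calc ∑ t, (Dd i * ((if t = s.1 then (1:ℝ) else 0) - 1/T))
              * (Dd i * ((if t = s'.1 then (1:ℝ) else 0) - 1/T))
          = Dd i ^ 2 * ∑ t, ((if t = s.1 then (1:ℝ) else 0) - 1/T)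
              * ((if t = s'.1 then (1:ℝ) else 0) - 1/T) := by
            rw [Finset.mul_sum]; exact Finset.sum_congr rfl fun t _ => by ring
        _ = Dd i ^ 2 * ((if s = s' then (1:ℝ) else 0) - 1/T) := by
            rw [time_sum hT']
            congr 2
            simp [Subtype.ext_iff]
    rw [Finset.sum_congr rfl fun i _ => hi i, ← Finset.sum_mul]
  -- g entries
  have hg' : ∀ s : {s : Fin T // s ≠ r},
      g s = (∑ i, Dd i * twoWayDemean Y i s.1) / (n*T) := by
    intro s
    rw [hg]
    congr 1
    refine Finset.sum_congr rfl fun i _ => ?_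
    simp only [demean_eventReg]
    calc ∑ t, (Dd i * ((if t = s.1 then (1:ℝ) else 0) - 1/T)) * twoWayDemean Y i t
        = ∑ t, ((if t = s.1 then (1:ℝ) else 0) * (Dd i * twoWayDemean Y i t)
            - Dd i / T * twoWayDemean Y i t) :=
          Finset.sum_congr rfl fun t _ => by ring
      _ = Dd i * twoWayDemean Y i s.1 - Dd i / T * ∑ t, twoWayDemean Y i t := by
          rw [Finset.sum_sub_distrib, ← Finset.mul_sum]
          simp [Finset.sum_ite_eq']
      _ = Dd i * twoWayDemean Y i s.1 := by
          rw [rowsum_demean hn' hT']; ring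
  set B := Bmat r ((n*T)/SD) with hB
  have hBapp : ∀ s s' : {s : Fin T // s ≠ r},
      B s s' = ((if s = s' then (1:ℝ) else 0) + 1) * ((n*T)/SD) := fun s s' => rfl
  have hGB : G * B = 1 := by
    ext s s''
    rw [Matrix.mul_apply]
    have hterm : ∀ s' : {s : Fin T // s ≠ r},
        G s s' * B s' s''
          = (if s = s' then (1:ℝ) else 0) * (if s' = s'' then (1:ℝ) else 0)
            + (if s = s' then (1:ℝ) else 0)
            - (if s' = s'' then (1:ℝ) else 0) / T - 1/T := by
      intro s'
      rw [hG', hBapp]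
      generalize (if s = s' then (1:ℝ) else 0) = a
      generalize (if s' = s'' then (1:ℝ) else 0) = b
      field_simp
      ring
    rw [Finset.sum_congr rfl fun s' _ => hterm s', Finset.sum_sub_distrib,
      Finset.sum_sub_distrib, Finset.sum_add_distrib, ← Finset.sum_div]
    have h1 : ∑ s' : {s : Fin T // s ≠ r},
        (if s = s' then (1:ℝ) else 0) * (if s' = s'' then (1:ℝ) else 0)
          = if s = s'' then (1:ℝ) else 0 := by
      simp [Finset.sum_ite_eq']
    have h2 : ∑ s' : {s : Fin T // s ≠ r}, (if s = s' then (1:ℝ) else 0) = 1 := by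
      simp [Finset.sum_ite_eq']
    have h3 : ∑ s' : {s : Fin T // s ≠ r}, (if s' = s'' then (1:ℝ) else 0) = 1 := by
      simp [Finset.sum_ite_eq]
    have h4 : ∑ _s' : {s : Fin T // s ≠ r}, (1:ℝ)/T = ((T:ℝ) - 1)/T := by
      rw [← Finset.sum_div, card_ne hT r]
    rw [h1, h2, h3, h4, Matrix.one_apply]
    field_simp
    split_ifs <;> ring
  have hBG : B * G = 1 := mul_eq_one_comm.mp hGB
  have hUnit : IsUnit G := ⟨⟨G, B, hGB, hBG⟩, rfl⟩
  have hGinv : G⁻¹ = B := Matrix.inv_eq_right_inv hGB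
  refine ⟨hUnit, fun s => ?_⟩
  rw [hGinv]
  have hsum_g : ∑ s' : {s : Fin T // s ≠ r}, g s'
      = (-(∑ i, Dd i * twoWayDemean Y i r)) / (n*T) := by
    rw [Finset.sum_congr rfl fun s' _ => hg' s', ← Finset.sum_div]
    congr 1
    have := sum_subtype_ne r (fun t => ∑ i, Dd i * twoWayDemean Y i t)
    rw [Finset.sum_comm] at this
    rw [show (∑ s' : {s : Fin T // s ≠ r}, ∑ i, Dd i * twoWayDemean Y i s'.1)
        = ∑ i, ∑ s' : {s : Fin T // s ≠ r}, Dd i * twoWayDemean Y i s'.1 from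
        Finset.sum_comm]
    rw [← Finset.sum_neg_distrib]
    refine Finset.sum_congr rfl fun i _ => ?_
    rw [← Finset.mul_sum, sum_subtype_ne r (fun t => twoWayDemean Y i t),
      rowsum_demean hn' hT']
    ring
  have hmv : (B *ᵥ g) s = (n*T)/SD * g s + (n*T)/SD * ∑ s' : {s : Fin T // s ≠ r}, g s' := by
    rw [Matrix.mulVec, dotProduct]
    calc ∑ s' : {s : Fin T // s ≠ r}, B s s' * g s'
        = ∑ s' : {s : Fin T // s ≠ r},
            ((if s = s' then (1:ℝ) else 0) * ((n*T)/SD * g s') + (n*T)/SD * g s') :=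
          Finset.sum_congr rfl fun s' _ => by rw [hBapp]; ring
      _ = (n*T)/SD * g s + (n*T)/SD * ∑ s' : {s : Fin T // s ≠ r}, g s' := by
          rw [Finset.sum_add_distrib, ← Finset.mul_sum]
          simp [Finset.sum_ite_eq']
  rw [hmv, hg' s, hsum_g]
  have hYdiff : ∀ i, (Y i s.1 - (∑ j, Y j s.1)/n) - (Y i r - (∑ j, Y j r)/n)
      = twoWayDemean Y i s.1 - twoWayDemean Y i r := by
    intro i; unfold twoWayDemean; ring
  simp only [hYdiff]
  rw [show (∑ i, Dd i * (twoWayDemean Y i s.1 - twoWayDemean Y i r))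
      = (∑ i, Dd i * twoWayDemean Y i s.1) - ∑ i, Dd i * twoWayDemean Y i r by
      rw [← Finset.sum_sub_distrib]; exact Finset.sum_congr rfl fun i _ => by ring]
  set A1 : ℝ := ∑ i, Dd i * twoWayDemean Y i s.1 with hA1
  set A2 : ℝ := ∑ i, Dd i * twoWayDemean Y i r with hA2
  field_simp
  ring
end

section
/- (Uniform strong law for the empirical covariance operator in function space.) Let (X_i)_{i∈ℕ} be an i.i.d. sequence of random elements of C([−1,1],ℝ) distributed as X, whose sample paths are almost surely twice continuously differentiable, with E[sup_{t∈[−1,1]} X(t)²] < ∞ and E[sup_{t∈(−1,1)} X′(t)²] < ∞. Set X̃_i = X_i − E[X] and X̃ = X − E[X] (pointwise means), Ĉ_n(s,t) = (1/n) Σ_{i≤n} X̃_i(s) X̃_i(t), and C(s,t) = E[X̃(s) X̃(t)]. Then sup_{s,t ∈ [−1,1]} | Ĉ_n(s,t) − C(s,t) | → 0 almost surely as n → ∞. -/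
open MeasureTheory ProbabilityTheory Filter Topology
noncomputable section EmpCovAux

/-- Rationals in `[-1,1]`, as an index type. -/
abbrev QI : Type := {q : ℚ // ((q:ℝ)) ∈ Set.Icc (-1:ℝ) 1}

instance : Nonempty QI := ⟨⟨0, by norm_num⟩⟩

/-- Measurable version of the sup norm over `[-1,1]`, using rational points. -/
def Msup (f : ℝ → ℝ) : ℝ := ⨆ p : QI, |f ((p:ℚ):ℝ)|

/-- Measurable version of the Lipschitz seminorm over `[-1,1]`, using rational points. -/
def Lsup (f : ℝ → ℝ) : ℝ :=
  ⨆ p : QI, ⨆ q : QI, |f ((p:ℚ):ℝ) - f ((q:ℚ):ℝ)| / |((p:ℚ):ℝ) - ((q:ℚ):ℝ)|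

lemma Msup_nonneg (f : ℝ → ℝ) : 0 ≤ Msup f :=
  Real.iSup_nonneg fun _ => abs_nonneg _

lemma Lsup_nonneg (f : ℝ → ℝ) : 0 ≤ Lsup f :=
  Real.iSup_nonneg fun _ => Real.iSup_nonneg fun _ => div_nonneg (abs_nonneg _) (abs_nonneg _)

lemma measurable_Msup : Measurable Msup :=
  Measurable.iSup fun p => (measurable_pi_apply ((p:ℚ):ℝ)).abs

lemma measurable_Lsup : Measurable Lsup :=
  Measurable.iSup fun p => Measurable.iSup fun q =>
    (((measurable_pi_apply ((p:ℚ):ℝ)).sub (measurable_pi_apply ((q:ℚ):ℝ))).abs).div_const _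

lemma sqrt_le_half {x : ℝ} (hx : 0 ≤ x) : Real.sqrt x ≤ (1 + x) / 2 := by
  have h : x ≤ ((1 + x) / 2) ^ 2 := by nlinarith [sq_nonneg (1 - x)]
  calc Real.sqrt x ≤ Real.sqrt (((1 + x) / 2) ^ 2) := Real.sqrt_le_sqrt h
    _ = (1 + x) / 2 := Real.sqrt_sq (by linarith)

/-- Rational approximation within `[-1,1]`. -/
lemma rat_approx {s : ℝ} (hs : s ∈ Set.Icc (-1:ℝ) 1) :
    ∃ u : ℕ → QI, Tendsto (fun n => (((u n : ℚ)):ℝ)) atTop (𝓝 s) := by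
  have h : ∀ n : ℕ, ∃ q : QI, |((q:ℚ):ℝ) - s| < 1 / (n + 1) := by
    intro n
    have hε : (0:ℝ) < 1 / (n + 1) := by positivity
    have hab : max (s - 1/(n+1)) (-1) < min (s + 1/(n+1)) 1 := by
      rcases hs with ⟨h1, h2⟩
      apply max_lt <;> apply lt_min <;> linarith
    obtain ⟨q, hq1, hq2⟩ := exists_rat_btwn hab
    refine ⟨⟨q, ?_, ?_⟩, ?_⟩
    · have := (max_lt_iff.1 hq1).2; linarith
    · have := (lt_min_iff.1 hq2).2; linarith
    · have h1 := (max_lt_iff.1 hq1).1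
      have h2 := (lt_min_iff.1 hq2).1
      rw [abs_lt]; constructor <;> simp only [] <;> linarith
  choose u hu using h
  refine ⟨u, ?_⟩
  rw [tendsto_iff_dist_tendsto_zero]
  apply squeeze_zero (fun n => dist_nonneg) (fun n => ?_)
    tendsto_one_div_add_atTop_nhds_zero_nat
  exact le_of_lt (by simpa [Real.dist_eq] using hu n)

end EmpCovAux
noncomputable section EmpCovAux2
variable {f : ℝ → ℝ}

lemma deriv_sq_le (hf : ContDiffOn ℝ 2 f (Set.Icc (-1:ℝ) 1)) :
    BddAbove (Set.range fun t : Set.Ioo (-1:ℝ) 1 => (deriv f ↑t) ^ 2) := by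
  have hudo : UniqueDiffOn ℝ (Set.Icc (-1:ℝ) 1) := uniqueDiffOn_Icc (by norm_num)
  have hg : ContinuousOn (fun x => (derivWithin f (Set.Icc (-1:ℝ) 1) x) ^ 2) (Set.Icc (-1:ℝ) 1) :=
    (hf.continuousOn_derivWithin hudo one_le_two).pow 2
  have hbdd : BddAbove ((fun x => (derivWithin f (Set.Icc (-1:ℝ) 1) x) ^ 2) '' Set.Icc (-1:ℝ) 1) :=
    (isCompact_Icc.image_of_continuousOn hg).bddAbove
  refine hbdd.mono ?_
  rintro x ⟨t, rfl⟩
  refine ⟨(t:ℝ), Set.Ioo_subset_Icc_self t.2, ?_⟩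
  simp only [derivWithin_of_mem_nhds (Icc_mem_nhds t.2.1 t.2.2)]

lemma slope_bound (hf : ContDiffOn ℝ 2 f (Set.Icc (-1:ℝ) 1))
    {a b : ℝ} (ha : a ∈ Set.Icc (-1:ℝ) 1) (hb : b ∈ Set.Icc (-1:ℝ) 1) (hab : a < b) :
    |f b - f a| ≤ Real.sqrt (⨆ t : Set.Ioo (-1:ℝ) 1, (deriv f ↑t) ^ 2) * (b - a) := by
  have hIcc : Set.Icc a b ⊆ Set.Icc (-1:ℝ) 1 := Set.Icc_subset_Icc ha.1 hb.2
  have hIoo : Set.Ioo a b ⊆ Set.Ioo (-1:ℝ) 1 := Set.Ioo_subset_Ioo (by exact ha.1) (by exact hb.2)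
  obtain ⟨c, hc, hslope⟩ := exists_hasDerivAt_eq_slope f (deriv f) hab
    (hf.continuousOn.mono hIcc)
    (fun x hx => (((hf.differentiableOn two_ne_zero).differentiableAt
      (Icc_mem_nhds (hIoo hx).1 (hIoo hx).2)).hasDerivAt))
  have hcI : c ∈ Set.Ioo (-1:ℝ) 1 := hIoo hc
  have hsq : (deriv f c) ^ 2 ≤ ⨆ t : Set.Ioo (-1:ℝ) 1, (deriv f ↑t) ^ 2 :=
    le_ciSup (deriv_sq_le hf) (⟨c, hcI⟩ : Set.Ioo (-1:ℝ) 1)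
  have habs : |deriv f c| ≤ Real.sqrt (⨆ t : Set.Ioo (-1:ℝ) 1, (deriv f ↑t) ^ 2) :=
    Real.abs_le_sqrt hsq
  have : |f b - f a| = |deriv f c| * (b - a) := by
    rw [hslope, abs_div, abs_of_pos (by linarith : (0:ℝ) < b - a), div_mul_cancel₀]
    linarith
  rw [this]
  exact mul_le_mul_of_nonneg_right habs (by linarith)

lemma sub_bound (hf : ContDiffOn ℝ 2 f (Set.Icc (-1:ℝ) 1))
    {a b : ℝ} (ha : a ∈ Set.Icc (-1:ℝ) 1) (hb : b ∈ Set.Icc (-1:ℝ) 1) :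
    |f a - f b| ≤ Real.sqrt (⨆ t : Set.Ioo (-1:ℝ) 1, (deriv f ↑t) ^ 2) * |a - b| := by
  rcases lt_trichotomy a b with h | h | h
  · rw [abs_sub_comm (f a), abs_of_nonpos (by linarith : a - b ≤ 0), neg_sub]
    exact slope_bound hf ha hb h
  · simp [h]
  · rw [abs_of_nonneg (by linarith : (0:ℝ) ≤ a - b), abs_sub_comm (f a)]
    have := slope_bound hf hb ha h
    rwa [abs_sub_comm (f a)] at this

end EmpCovAux2

noncomputable section EmpCovAux3
variable {f : ℝ → ℝ}

lemma sq_bddAbove (hf : ContDiffOn ℝ 2 f (Set.Icc (-1:ℝ) 1)) :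
    BddAbove (Set.range fun t : Set.Icc (-1:ℝ) 1 => (f ↑t) ^ 2) := by
  have hbdd : BddAbove ((fun x => (f x) ^ 2) '' Set.Icc (-1:ℝ) 1) :=
    (isCompact_Icc.image_of_continuousOn (hf.continuousOn.pow 2)).bddAbove
  refine hbdd.mono ?_
  rintro x ⟨t, rfl⟩
  exact ⟨(t:ℝ), t.2, rfl⟩

lemma abs_le_sqrt_sup (hf : ContDiffOn ℝ 2 f (Set.Icc (-1:ℝ) 1))
    {s : ℝ} (hs : s ∈ Set.Icc (-1:ℝ) 1) :
    |f s| ≤ Real.sqrt (⨆ t : Set.Icc (-1:ℝ) 1, (f ↑t) ^ 2) :=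
  Real.abs_le_sqrt (le_ciSup (sq_bddAbove hf) (⟨s, hs⟩ : Set.Icc (-1:ℝ) 1))

lemma Msup_le_sqrt (hf : ContDiffOn ℝ 2 f (Set.Icc (-1:ℝ) 1)) :
    Msup f ≤ Real.sqrt (⨆ t : Set.Icc (-1:ℝ) 1, (f ↑t) ^ 2) :=
  ciSup_le fun p => abs_le_sqrt_sup hf p.2

lemma quot_le_sqrt (hf : ContDiffOn ℝ 2 f (Set.Icc (-1:ℝ) 1))
    {a b : ℝ} (ha : a ∈ Set.Icc (-1:ℝ) 1) (hb : b ∈ Set.Icc (-1:ℝ) 1) :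
    |f a - f b| / |a - b| ≤ Real.sqrt (⨆ t : Set.Ioo (-1:ℝ) 1, (deriv f ↑t) ^ 2) := by
  rcases eq_or_ne a b with h | h
  · simp [h, Real.sqrt_nonneg]
  · rw [div_le_iff₀ (abs_pos.2 (sub_ne_zero.2 h))]
    exact sub_bound hf ha hb

lemma Lsup_le_sqrt (hf : ContDiffOn ℝ 2 f (Set.Icc (-1:ℝ) 1)) :
    Lsup f ≤ Real.sqrt (⨆ t : Set.Ioo (-1:ℝ) 1, (deriv f ↑t) ^ 2) :=
  ciSup_le fun p => ciSup_le fun q => quot_le_sqrt hf p.2 q.2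

lemma abs_rat_le_Msup (hf : ContDiffOn ℝ 2 f (Set.Icc (-1:ℝ) 1)) (p : QI) :
    |f ((p:ℚ):ℝ)| ≤ Msup f :=
  le_ciSup ⟨Real.sqrt (⨆ t : Set.Icc (-1:ℝ) 1, (f ↑t) ^ 2),
    by rintro x ⟨q, rfl⟩; exact abs_le_sqrt_sup hf q.2⟩ p

lemma quot_rat_le_Lsup (hf : ContDiffOn ℝ 2 f (Set.Icc (-1:ℝ) 1)) (p q : QI) :
    |f ((p:ℚ):ℝ) - f ((q:ℚ):ℝ)| / |((p:ℚ):ℝ) - ((q:ℚ):ℝ)| ≤ Lsup f := by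
  have hbd1 : BddAbove (Set.range fun r : QI =>
      |f ((p:ℚ):ℝ) - f ((r:ℚ):ℝ)| / |((p:ℚ):ℝ) - ((r:ℚ):ℝ)|) := by
    refine ⟨Real.sqrt (⨆ t : Set.Ioo (-1:ℝ) 1, (deriv f ↑t) ^ 2), ?_⟩
    rintro x ⟨r, rfl⟩
    exact quot_le_sqrt hf p.2 r.2
  have hbd2 : BddAbove (Set.range fun r : QI =>
      ⨆ q' : QI, |f ((r:ℚ):ℝ) - f ((q':ℚ):ℝ)| / |((r:ℚ):ℝ) - ((q':ℚ):ℝ)|) := by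
    refine ⟨Real.sqrt (⨆ t : Set.Ioo (-1:ℝ) 1, (deriv f ↑t) ^ 2), ?_⟩
    rintro x ⟨r, rfl⟩
    exact ciSup_le fun q' => quot_le_sqrt hf r.2 q'.2
  exact le_trans (le_ciSup hbd1 q) (le_ciSup hbd2 p)

lemma tendsto_f_of_rat (hf : ContDiffOn ℝ 2 f (Set.Icc (-1:ℝ) 1))
    {s : ℝ} (hs : s ∈ Set.Icc (-1:ℝ) 1) {u : ℕ → QI}
    (hu : Tendsto (fun n => (((u n : ℚ)):ℝ)) atTop (𝓝 s)) :
    Tendsto (fun n => f (((u n : ℚ)):ℝ)) atTop (𝓝 (f s)) := by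
  have h1 : Tendsto (fun n => (((u n : ℚ)):ℝ)) atTop (𝓝[Set.Icc (-1:ℝ) 1] s) :=
    tendsto_nhdsWithin_of_tendsto_nhds_of_eventually_within _ hu
      (Eventually.of_forall fun n => (u n).2)
  exact (hf.continuousOn s hs).tendsto.comp h1

lemma abs_le_Msup (hf : ContDiffOn ℝ 2 f (Set.Icc (-1:ℝ) 1))
    {s : ℝ} (hs : s ∈ Set.Icc (-1:ℝ) 1) : |f s| ≤ Msup f := by
  obtain ⟨u, hu⟩ := rat_approx hs
  exact le_of_tendsto ((tendsto_f_of_rat hf hs hu).abs)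
    (Eventually.of_forall fun n => abs_rat_le_Msup hf (u n))

lemma sub_le_Lsup (hf : ContDiffOn ℝ 2 f (Set.Icc (-1:ℝ) 1))
    {s t : ℝ} (hs : s ∈ Set.Icc (-1:ℝ) 1) (ht : t ∈ Set.Icc (-1:ℝ) 1) :
    |f s - f t| ≤ Lsup f * |s - t| := by
  rcases eq_or_ne s t with h | h
  · simp [h, Lsup_nonneg f]
  · have hst : |s - t| ≠ 0 := abs_ne_zero.2 (sub_ne_zero.2 h)
    suffices hq : |f s - f t| / |s - t| ≤ Lsup f by
      rw [div_le_iff₀ (abs_pos.2 (sub_ne_zero.2 h))] at hq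
      exact hq
    obtain ⟨u, hu⟩ := rat_approx hs
    obtain ⟨v, hv⟩ := rat_approx ht
    have h1 : Tendsto (fun n => |f (((u n : ℚ)):ℝ) - f (((v n : ℚ)):ℝ)|
        / |(((u n : ℚ)):ℝ) - (((v n : ℚ)):ℝ)|) atTop (𝓝 (|f s - f t| / |s - t|)) := by
      apply Tendsto.div
      · exact ((tendsto_f_of_rat hf hs hu).sub (tendsto_f_of_rat hf ht hv)).abs
      · exact (hu.sub hv).abs
      · exact hst
    exact le_of_tendsto h1 (Eventually.of_forall fun n => quot_rat_le_Lsup hf (u n) (v n))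

lemma grid_cover (N : ℕ) (hN : 1 ≤ N) :
    ∃ r : ℕ → QI, ∀ s ∈ Set.Icc (-1:ℝ) 1, ∃ k ≤ N, |s - ((r k : ℚ):ℝ)| ≤ 2 / N := by
  have hN0 : (0:ℝ) < N := by exact_mod_cast hN
  have hmem : ∀ k : ℕ, ((( -1 + 2*((min k N : ℕ):ℚ)/(N:ℚ) : ℚ)):ℝ) ∈ Set.Icc (-1:ℝ) 1 := by
    intro k
    have h1 : ((min k N : ℕ):ℝ) ≤ (N:ℝ) := by exact_mod_cast min_le_right k N
    have h2 : (0:ℝ) ≤ ((min k N : ℕ):ℝ) := by positivity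
    push_cast
    push_cast at h1 h2
    constructor
    · have : (0:ℝ) ≤ 2*(min (k:ℝ) (N:ℝ))/N := by positivity
      linarith
    · have : 2*(min (k:ℝ) (N:ℝ))/N ≤ 2 := by
        rw [div_le_iff₀ hN0]; linarith
      linarith
  refine ⟨fun k => ⟨-1 + 2*((min k N : ℕ):ℚ)/(N:ℚ), hmem k⟩, ?_⟩
  intro s hs
  set k : ℕ := ⌊(s+1)*N/2⌋₊ with hk
  have hnn : (0:ℝ) ≤ (s+1)*N/2 := by
    have : (0:ℝ) ≤ s + 1 := by linarith [hs.1]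
    positivity
  have hk1 : (k:ℝ) ≤ (s+1)*N/2 := Nat.floor_le hnn
  have hk2 : (s+1)*N/2 < k + 1 := Nat.lt_floor_add_one _
  have hkN : k ≤ N := by
    have : (k:ℝ) ≤ (N:ℝ) := by
      have : (s+1)*N/2 ≤ N := by nlinarith [hs.2]
      linarith
    exact_mod_cast this
  refine ⟨k, hkN, ?_⟩
  have hmin : min k N = k := min_eq_left hkN
  have hval : (((-1 + 2*((min k N : ℕ):ℚ)/(N:ℚ) : ℚ)):ℝ) = -1 + 2*(k:ℝ)/N := by
    rw [hmin]; push_cast; ring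
  rw [hval]
  rw [abs_le]
  constructor
  · have : 2*(k:ℝ)/N ≤ s + 1 := by
      rw [div_le_iff₀ hN0]; nlinarith
    have h2N : (0:ℝ) ≤ 2/N := by positivity
    linarith
  · have : s + 1 ≤ 2*(k:ℝ)/N + 2/N := by
      rw [← add_div, le_div_iff₀ hN0]; nlinarith
    linarith

end EmpCovAux3

set_option maxHeartbeats 1600000 in
/-- Uniform strong law for the empirical covariance operator in
function space: for i.i.d. random functions with a.s. twice continuously differentiable
sample paths and square-integrable sup-norms (of paths and derivatives),
`sup_{s,t ∈ [−1,1]} |Ĉ_n(s,t) − C(s,t)| → 0` almost surely. -/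
theorem empirical_covariance_uniform_strong_law
    {Ω : Type*} [MeasurableSpace Ω] (P : Measure Ω) [IsProbabilityMeasure P]
    (X : ℕ → Ω → ℝ → ℝ)
    (hmeas : ∀ i, Measurable (X i))
    (hindep : iIndepFun X P)
    (hident : ∀ i, IdentDistrib (X i) (X 0) P P)
    (hsmooth : ∀ i, ∀ᵐ ω ∂P, ContDiffOn ℝ 2 (X i ω) (Set.Icc (-1:ℝ) 1))
    (hsup : Integrable (fun ω => ⨆ t : Set.Icc (-1:ℝ) 1, (X 0 ω ↑t) ^ 2) P)
    (hsup' : Integrable (fun ω => ⨆ t : Set.Ioo (-1:ℝ) 1, (deriv (X 0 ω) ↑t) ^ 2) P)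
    (m : ℝ → ℝ) (hm : ∀ t, m t = ∫ ω, X 0 ω t ∂P)
    (C : ℝ → ℝ → ℝ) (hC : ∀ s t, C s t = ∫ ω, (X 0 ω s - m s) * (X 0 ω t - m t) ∂P) :
    ∀ᵐ ω ∂P,
      Tendsto
        (fun n : ℕ => ⨆ s : Set.Icc (-1:ℝ) 1, ⨆ t : Set.Icc (-1:ℝ) 1,
          |(∑ i ∈ Finset.range n, (X i ω ↑s - m ↑s) * (X i ω ↑t - m ↑t)) / n - C ↑s ↑t|)
        atTop (nhds 0) := by
  classical
  haveI : Nonempty (Set.Icc (-1:ℝ) 1) := ⟨⟨0, by norm_num⟩⟩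
  set S : Ω → ℝ := fun ω => ⨆ t : Set.Icc (-1:ℝ) 1, (X 0 ω ↑t) ^ 2 with hS
  set S' : Ω → ℝ := fun ω => ⨆ t : Set.Ioo (-1:ℝ) 1, (deriv (X 0 ω) ↑t) ^ 2 with hS'
  have hSnn : ∀ ω, 0 ≤ S ω := fun ω => Real.iSup_nonneg fun t => sq_nonneg _
  have hS'nn : ∀ ω, 0 ≤ S' ω := fun ω => Real.iSup_nonneg fun t => sq_nonneg _
  have hsm0 := hsmooth 0
  -- sup and Lipschitz dominators
  have hMmeas : ∀ i, Measurable fun ω => Msup (X i ω) :=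
    fun i => measurable_Msup.comp (hmeas i)
  have hLmeas : ∀ i, Measurable fun ω => Lsup (X i ω) :=
    fun i => measurable_Lsup.comp (hmeas i)
  have hMint : Integrable (fun ω => Msup (X 0 ω)) P := by
    refine Integrable.mono' (((integrable_const (1:ℝ)).add hsup).div_const 2)
      (hMmeas 0).aestronglyMeasurable ?_
    filter_upwards [hsm0] with ω hω
    rw [Real.norm_eq_abs, abs_of_nonneg (Msup_nonneg _)]
    exact le_trans (Msup_le_sqrt hω) (sqrt_le_half (hSnn ω))
  have hLint : Integrable (fun ω => Lsup (X 0 ω)) P := by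
    refine Integrable.mono' (((integrable_const (1:ℝ)).add hsup').div_const 2)
      (hLmeas 0).aestronglyMeasurable ?_
    filter_upwards [hsm0] with ω hω
    rw [Real.norm_eq_abs, abs_of_nonneg (Lsup_nonneg _)]
    exact le_trans (Lsup_le_sqrt hω) (sqrt_le_half (hS'nn ω))
  set cm : ℝ := ∫ ω, Msup (X 0 ω) ∂P with hcm
  set K : ℝ := ∫ ω, Lsup (X 0 ω) ∂P with hK
  have hcm0 : 0 ≤ cm := integral_nonneg fun ω => Msup_nonneg _
  have hK0 : 0 ≤ K := integral_nonneg fun ω => Lsup_nonneg _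
  -- evaluations are integrable
  have hevalmeas : ∀ i (s : ℝ), Measurable fun ω => X i ω s :=
    fun i s => (measurable_pi_apply s).comp (hmeas i)
  have hevalint : ∀ s ∈ Set.Icc (-1:ℝ) 1, Integrable (fun ω => X 0 ω s) P := by
    intro s hs
    refine Integrable.mono' (((integrable_const (1:ℝ)).add hsup).div_const 2)
      (hevalmeas 0 s).aestronglyMeasurable ?_
    filter_upwards [hsm0] with ω hω
    rw [Real.norm_eq_abs]
    exact le_trans (abs_le_sqrt_sup hω hs) (sqrt_le_half (hSnn ω))
  -- bounds for the mean function
  have hmb : ∀ s ∈ Set.Icc (-1:ℝ) 1, |m s| ≤ cm := by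
    intro s hs
    rw [hm s, ← Real.norm_eq_abs]
    refine le_trans (norm_integral_le_integral_norm _) ?_
    refine integral_mono_ae (hevalint s hs).norm hMint ?_
    filter_upwards [hsm0] with ω hω
    simpa [Real.norm_eq_abs] using abs_le_Msup hω hs
  have hmk : ∀ s ∈ Set.Icc (-1:ℝ) 1, ∀ t ∈ Set.Icc (-1:ℝ) 1,
      |m s - m t| ≤ K * |s - t| := by
    intro s hs t ht
    rw [hm s, hm t, ← integral_sub (hevalint s hs) (hevalint t ht), ← Real.norm_eq_abs]
    refine le_trans (norm_integral_le_integral_norm _) ?_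
    have := integral_mono_ae ((hevalint s hs).sub (hevalint t ht)).norm
      (hLint.mul_const |s - t|) ?_
    · refine le_trans this ?_
      rw [integral_mul_const]
    · filter_upwards [hsm0] with ω hω
      simpa [Real.norm_eq_abs] using sub_le_Lsup hω hs ht
  -- the core pointwise inequality
  have core : ∀ f : ℝ → ℝ, ContDiffOn ℝ 2 f (Set.Icc (-1:ℝ) 1) →
      ∀ s ∈ Set.Icc (-1:ℝ) 1, ∀ t ∈ Set.Icc (-1:ℝ) 1,
      ∀ p ∈ Set.Icc (-1:ℝ) 1, ∀ q ∈ Set.Icc (-1:ℝ) 1,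
      |(f s - m s) * (f t - m t) - (f p - m p) * (f q - m q)| ≤
        (Msup f + cm) * (Lsup f + K) * (|s - p| + |t - q|) := by
    intro f hf s hs t ht p hp q hq
    have hMa : ∀ u, u ∈ Set.Icc (-1:ℝ) 1 → |f u - m u| ≤ Msup f + cm := fun u hu =>
      le_trans (abs_sub _ _) (add_le_add (abs_le_Msup hf hu) (hmb u hu))
    have hLa : ∀ u ∈ Set.Icc (-1:ℝ) 1, ∀ v ∈ Set.Icc (-1:ℝ) 1,
        |(f u - m u) - (f v - m v)| ≤ (Lsup f + K) * |u - v| := by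
      intro u hu v hv
      have : (f u - m u) - (f v - m v) = (f u - f v) - (m u - m v) := by ring
      rw [this]
      refine le_trans (abs_sub _ _) ?_
      rw [add_mul]
      exact add_le_add (sub_le_Lsup hf hu hv) (hmk u hu v hv)
    have h1 : (f s - m s) * (f t - m t) - (f p - m p) * (f q - m q) =
        (f s - m s) * ((f t - m t) - (f q - m q)) +
        (f q - m q) * ((f s - m s) - (f p - m p)) := by ring
    rw [h1]
    refine le_trans (abs_add_le _ _) ?_
    rw [abs_mul, abs_mul]
    have hMcm : (0:ℝ) ≤ Msup f + cm := add_nonneg (Msup_nonneg f) hcm0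
    have hLK : (0:ℝ) ≤ Lsup f + K := add_nonneg (Lsup_nonneg f) hK0
    have b1 := mul_le_mul (hMa s hs) (hLa t ht q hq) (abs_nonneg _) hMcm
    have b2 := mul_le_mul (hMa q hq) (hLa s hs p hp) (abs_nonneg _) hMcm
    nlinarith [abs_nonneg (s - p), abs_nonneg (t - q), mul_nonneg hLK (abs_nonneg (s-p)),
      mul_nonneg hLK (abs_nonneg (t-q))]
  -- integrability of the product evaluations
  have hZint : ∀ s ∈ Set.Icc (-1:ℝ) 1, ∀ t ∈ Set.Icc (-1:ℝ) 1,
      Integrable (fun ω => (X 0 ω s - m s) * (X 0 ω t - m t)) P := by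
    intro s hs t ht
    refine Integrable.mono' ((hsup.const_mul (1 + cm)).add (integrable_const (cm + cm^2)))
      (((hevalmeas 0 s).sub measurable_const).mul
        ((hevalmeas 0 t).sub measurable_const)).aestronglyMeasurable ?_
    filter_upwards [hsm0] with ω hω
    rw [Real.norm_eq_abs, abs_mul]
    have h1 : |X 0 ω s - m s| ≤ Real.sqrt (S ω) + cm :=
      (abs_sub _ _).trans (add_le_add (abs_le_sqrt_sup hω hs) (hmb s hs))
    have h2 : |X 0 ω t - m t| ≤ Real.sqrt (S ω) + cm :=
      (abs_sub _ _).trans (add_le_add (abs_le_sqrt_sup hω ht) (hmb t ht))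
    have h3 := Real.sq_sqrt (hSnn ω)
    have h4 := Real.sqrt_nonneg (S ω)
    have h5 := sqrt_le_half (hSnn ω)
    simp only [Pi.add_apply]
    nlinarith [abs_nonneg (X 0 ω s - m s), abs_nonneg (X 0 ω t - m t)]
  -- the Lipschitz dominator process and its integrability
  set A : ℕ → Ω → ℝ := fun i ω => (Msup (X i ω) + cm) * (Lsup (X i ω) + K) with hA
  have hAnn : ∀ i ω, 0 ≤ A i ω := fun i ω =>
    mul_nonneg (add_nonneg (Msup_nonneg _) hcm0) (add_nonneg (Lsup_nonneg _) hK0)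
  have hAint : Integrable (A 0) P := by
    refine Integrable.mono'
      ((((hsup.add hsup').div_const 2).add
        ((((integrable_const (1:ℝ)).add hsup).div_const 2).const_mul K)).add
        (((((integrable_const (1:ℝ)).add hsup').div_const 2).const_mul cm).add
          (integrable_const (cm * K))))
      (((hMmeas 0).add_const cm).mul ((hLmeas 0).add_const K)).aestronglyMeasurable ?_
    filter_upwards [hsm0] with ω hω
    rw [Real.norm_eq_abs, abs_of_nonneg (hAnn 0 ω)]
    have hM1 : Msup (X 0 ω) ≤ Real.sqrt (S ω) := Msup_le_sqrt hω
    have hL1 : Lsup (X 0 ω) ≤ Real.sqrt (S' ω) := Lsup_le_sqrt hω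
    have hM0 := Msup_nonneg (X 0 ω)
    have hL0 := Lsup_nonneg (X 0 ω)
    have hM2 : (Msup (X 0 ω))^2 ≤ S ω := by
      nlinarith [Real.sq_sqrt (hSnn ω), Real.sqrt_nonneg (S ω)]
    have hL2 : (Lsup (X 0 ω))^2 ≤ S' ω := by
      nlinarith [Real.sq_sqrt (hS'nn ω), Real.sqrt_nonneg (S' ω)]
    have hM3 : Msup (X 0 ω) ≤ (1 + S ω)/2 := hM1.trans (sqrt_le_half (hSnn ω))
    have hL3 : Lsup (X 0 ω) ≤ (1 + S' ω)/2 := hL1.trans (sqrt_le_half (hS'nn ω))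
    simp only [A, Pi.add_apply]
    nlinarith [sq_nonneg (Msup (X 0 ω) - Lsup (X 0 ω))]
  set B : ℝ := ∫ ω, A 0 ω ∂P with hB
  have hB0 : 0 ≤ B := integral_nonneg fun ω => hAnn 0 ω
  -- SLLN for the dominator process
  have hu_meas : Measurable fun f : ℝ → ℝ => (Msup f + cm) * (Lsup f + K) :=
    (measurable_Msup.add_const cm).mul (measurable_Lsup.add_const K)
  have hAslln : ∀ᵐ ω ∂P, Tendsto (fun n : ℕ => (∑ i ∈ Finset.range n, A i ω) / n)
      atTop (𝓝 B) := by
    have h := strong_law_ae_real A hAint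
      (fun i j hij => (hindep.comp (fun _ => fun f : ℝ → ℝ => (Msup f + cm) * (Lsup f + K))
        (fun _ => hu_meas)).indepFun hij)
      (fun i => (hident i).comp hu_meas)
    exact h
  -- SLLN at rational pairs
  have hZslln : ∀ p q : QI, ∀ᵐ ω ∂P, Tendsto
      (fun n : ℕ => (∑ i ∈ Finset.range n,
        (X i ω ((p:ℚ):ℝ) - m ((p:ℚ):ℝ)) * (X i ω ((q:ℚ):ℝ) - m ((q:ℚ):ℝ))) / n)
      atTop (𝓝 (C ((p:ℚ):ℝ) ((q:ℚ):ℝ))) := by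
    intro p q
    set u : (ℝ → ℝ) → ℝ :=
      fun f => (f ((p:ℚ):ℝ) - m ((p:ℚ):ℝ)) * (f ((q:ℚ):ℝ) - m ((q:ℚ):ℝ)) with hu
    have humeas : Measurable u :=
      ((measurable_pi_apply _).sub_const _).mul ((measurable_pi_apply _).sub_const _)
    have h := strong_law_ae_real (fun i ω => u (X i ω)) (hZint _ p.2 _ q.2)
      (fun i j hij => (hindep.comp (fun _ => u) (fun _ => humeas)).indepFun hij)
      (fun i => (hident i).comp humeas)
    have hCeq : (∫ ω, u (X 0 ω) ∂P) = C ((p:ℚ):ℝ) ((q:ℚ):ℝ) := (hC _ _).symm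
    rw [hCeq] at h
    exact h
  have hZall : ∀ᵐ ω ∂P, ∀ p q : QI, Tendsto
      (fun n : ℕ => (∑ i ∈ Finset.range n,
        (X i ω ((p:ℚ):ℝ) - m ((p:ℚ):ℝ)) * (X i ω ((q:ℚ):ℝ) - m ((q:ℚ):ℝ))) / n)
      atTop (𝓝 (C ((p:ℚ):ℝ) ((q:ℚ):ℝ))) := by
    rw [ae_all_iff]; intro p; rw [ae_all_iff]; intro q; exact hZslln p q
  -- Lipschitz continuity of the limit covariance
  have hCLip : ∀ s ∈ Set.Icc (-1:ℝ) 1, ∀ t ∈ Set.Icc (-1:ℝ) 1,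
      ∀ p ∈ Set.Icc (-1:ℝ) 1, ∀ q ∈ Set.Icc (-1:ℝ) 1,
      |C s t - C p q| ≤ B * (|s - p| + |t - q|) := by
    intro s hs t ht p hp q hq
    rw [hC s t, hC p q, ← integral_sub (hZint s hs t ht) (hZint p hp q hq),
      ← Real.norm_eq_abs]
    refine le_trans (norm_integral_le_integral_norm _) ?_
    have hmono := integral_mono_ae ((hZint s hs t ht).sub (hZint p hp q hq)).norm
      (hAint.mul_const (|s - p| + |t - q|)) ?_
    · refine le_trans hmono ?_
      rw [integral_mul_const]
    · filter_upwards [hsm0] with ω hω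
      simpa [Real.norm_eq_abs] using core (X 0 ω) hω s hs t ht p hp q hq
  -- almost-sure final assembly
  filter_upwards [ae_all_iff.2 hsmooth, hAslln, hZall] with ω hωsm hωA hωZ
  have hF0 : ∀ n : ℕ, 0 ≤ ⨆ s : Set.Icc (-1:ℝ) 1, ⨆ t : Set.Icc (-1:ℝ) 1,
      |(∑ i ∈ Finset.range n, (X i ω ↑s - m ↑s) * (X i ω ↑t - m ↑t)) / n - C ↑s ↑t| :=
    fun n => Real.iSup_nonneg fun s => Real.iSup_nonneg fun t => abs_nonneg _
  refine tendsto_order.2 ⟨fun a ha => ?_, fun a ha => ?_⟩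
  · exact Eventually.of_forall fun n => lt_of_lt_of_le ha (hF0 n)
  obtain ⟨N₀, hN₀⟩ := exists_nat_ge ((2*B+2)*8/a)
  set N : ℕ := N₀ + 1 with hNdef
  have hN1 : 1 ≤ N := Nat.le_add_left 1 N₀
  have hNpos : (0:ℝ) < N := by exact_mod_cast Nat.succ_pos N₀
  have hNge : (2*B+2)*8/a ≤ (N:ℝ) := by
    refine hN₀.trans ?_
    exact_mod_cast Nat.le_succ N₀
  have h8 : (2*B+2)*8 ≤ (N:ℝ)*a := by
    rw [div_le_iff₀ ha] at hNge; linarith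
  have hNbound : (2*B+2)*(4/(N:ℝ)) ≤ a/2 := by
    rw [mul_div_assoc', div_le_div_iff₀ hNpos two_pos]
    nlinarith
  obtain ⟨r, hr⟩ := grid_cover N hN1
  have hev1 : ∀ᶠ n in atTop, (∑ i ∈ Finset.range n, A i ω) / n ≤ B + 1 :=
    hωA.eventually (eventually_le_nhds (lt_add_one B))
  have hev2 : ∀ᶠ n in atTop, ∀ k ∈ Finset.range (N+1), ∀ l ∈ Finset.range (N+1),
      |(∑ i ∈ Finset.range n,
        (X i ω ((r k:ℚ):ℝ) - m ((r k:ℚ):ℝ)) * (X i ω ((r l:ℚ):ℝ) - m ((r l:ℚ):ℝ))) / n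
        - C ((r k:ℚ):ℝ) ((r l:ℚ):ℝ)| < a/4 := by
    rw [eventually_all_finset]
    intro k hk
    rw [eventually_all_finset]
    intro l hl
    have hball : ∀ᶠ x in 𝓝 (C ((r k:ℚ):ℝ) ((r l:ℚ):ℝ)),
        |x - C ((r k:ℚ):ℝ) ((r l:ℚ):ℝ)| < a/4 := by
      filter_upwards [Metric.ball_mem_nhds (C ((r k:ℚ):ℝ) ((r l:ℚ):ℝ))
        (by positivity : (0:ℝ) < a/4)] with x hx
      simpa [Real.dist_eq] using hx
    exact (hωZ (r k) (r l)).eventually hball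
  filter_upwards [hev1, hev2] with n hn1 hn2
  have key : ∀ s : Set.Icc (-1:ℝ) 1, ∀ t : Set.Icc (-1:ℝ) 1,
      |(∑ i ∈ Finset.range n, (X i ω ↑s - m ↑s) * (X i ω ↑t - m ↑t)) / n - C ↑s ↑t|
        ≤ a/2 + a/4 := by
    intro s t
    obtain ⟨k, hkN, hks⟩ := hr (↑s) s.2
    obtain ⟨l, hlN, hlt⟩ := hr (↑t) t.2
    set p : ℝ := ((r k:ℚ):ℝ) with hpdef
    set q : ℝ := ((r l:ℚ):ℝ) with hqdef
    have hp : p ∈ Set.Icc (-1:ℝ) 1 := (r k).2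
    have hq : q ∈ Set.Icc (-1:ℝ) 1 := (r l).2
    have hc4 : |(↑s:ℝ) - p| + |(↑t:ℝ) - q| ≤ 4/(N:ℝ) := by
      have h24 : (2:ℝ)/N + 2/N = 4/N := by ring
      linarith [hks, hlt]
    have hcnn : (0:ℝ) ≤ |(↑s:ℝ) - p| + |(↑t:ℝ) - q| :=
      add_nonneg (abs_nonneg _) (abs_nonneg _)
    have havg0 : 0 ≤ (∑ i ∈ Finset.range n, A i ω)/n :=
      div_nonneg (Finset.sum_nonneg fun i _ => hAnn i ω) (Nat.cast_nonneg n)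
    -- step 1 : chaining for the empirical covariance
    have hstep1 : |(∑ i ∈ Finset.range n, (X i ω ↑s - m ↑s) * (X i ω ↑t - m ↑t)) / n
        - (∑ i ∈ Finset.range n, (X i ω p - m p) * (X i ω q - m q)) / n|
        ≤ ((∑ i ∈ Finset.range n, A i ω)/n) * (|(↑s:ℝ) - p| + |(↑t:ℝ) - q|) := by
      rw [div_sub_div_same, ← Finset.sum_sub_distrib, abs_div, Nat.abs_cast]
      calc |∑ i ∈ Finset.range n, ((X i ω ↑s - m ↑s) * (X i ω ↑t - m ↑t)
              - (X i ω p - m p) * (X i ω q - m q))| / (n:ℝ)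
          ≤ (∑ i ∈ Finset.range n, |(X i ω ↑s - m ↑s) * (X i ω ↑t - m ↑t)
              - (X i ω p - m p) * (X i ω q - m q)|) / (n:ℝ) := by
            gcongr
            exact Finset.abs_sum_le_sum_abs _ _
        _ ≤ (∑ i ∈ Finset.range n, A i ω * (|(↑s:ℝ) - p| + |(↑t:ℝ) - q|)) / (n:ℝ) := by
            gcongr with i hi
            exact core (X i ω) (hωsm i) ↑s s.2 ↑t t.2 p hp q hq
        _ = ((∑ i ∈ Finset.range n, A i ω)/n) * (|(↑s:ℝ) - p| + |(↑t:ℝ) - q|) := by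
            rw [← Finset.sum_mul]; ring
    have hstep1' : ((∑ i ∈ Finset.range n, A i ω)/n) * (|(↑s:ℝ) - p| + |(↑t:ℝ) - q|)
        ≤ (B+1) * (4/(N:ℝ)) :=
      mul_le_mul hn1 hc4 hcnn (by linarith)
    -- step 2 : grid SLLN
    have hstep2 : |(∑ i ∈ Finset.range n, (X i ω p - m p) * (X i ω q - m q)) / n
        - C p q| < a/4 :=
      hn2 k (Finset.mem_range.2 (Nat.lt_succ_of_le hkN))
        l (Finset.mem_range.2 (Nat.lt_succ_of_le hlN))
    -- step 3 : Lipschitz bound on C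
    have hstep3 : |C p q - C ↑s ↑t| ≤ B * (4/(N:ℝ)) := by
      refine le_trans (hCLip p hp q hq ↑s s.2 ↑t t.2) ?_
      have e1 : |p - (↑s:ℝ)| = |(↑s:ℝ) - p| := abs_sub_comm _ _
      have e2 : |q - (↑t:ℝ)| = |(↑t:ℝ) - q| := abs_sub_comm _ _
      rw [e1, e2]
      exact mul_le_mul_of_nonneg_left hc4 hB0
    have htri : |(∑ i ∈ Finset.range n, (X i ω ↑s - m ↑s) * (X i ω ↑t - m ↑t)) / n
        - C ↑s ↑t|
        ≤ |(∑ i ∈ Finset.range n, (X i ω ↑s - m ↑s) * (X i ω ↑t - m ↑t)) / n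
            - (∑ i ∈ Finset.range n, (X i ω p - m p) * (X i ω q - m q)) / n|
          + |(∑ i ∈ Finset.range n, (X i ω p - m p) * (X i ω q - m q)) / n - C p q|
          + |C p q - C ↑s ↑t| := by
      have := abs_sub_le
        ((∑ i ∈ Finset.range n, (X i ω ↑s - m ↑s) * (X i ω ↑t - m ↑t)) / (n:ℝ))
        ((∑ i ∈ Finset.range n, (X i ω p - m p) * (X i ω q - m q)) / (n:ℝ))
        (C ↑s ↑t)
      have h2 := abs_sub_le
        ((∑ i ∈ Finset.range n, (X i ω p - m p) * (X i ω q - m q)) / (n:ℝ))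
        (C p q) (C ↑s ↑t)
      linarith
    have h4N : (0:ℝ) ≤ 4/(N:ℝ) := by positivity
    have hx : (B+1) * (4/(N:ℝ)) + B * (4/(N:ℝ)) ≤ a/2 := by
      have he : (B+1)*(4/(N:ℝ)) + B*(4/(N:ℝ)) = (2*B+1)*(4/(N:ℝ)) := by ring
      rw [he]
      refine le_trans (mul_le_mul_of_nonneg_right (by linarith : (2*B+1) ≤ 2*B+2) h4N) hNbound
    linarith [hstep1.trans hstep1', hstep2, hstep3, htri]
  refine lt_of_le_of_lt (ciSup_le fun s => ciSup_le fun t => key s t) (by linarith)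
end

section
/- (Theorem 6: uniform consistency of the interpolation estimator, quantitative form.) Assume additionally that the nodes are equidistant, t_j = −1 + 2(j−1)/(T−1) for j = 1,…,T, and that β is continuous on [−1,1], differentiable on (−1,1), with |β′(t)| ≤ K for all t ∈ (−1,1). Then sup_{t ∈ [−1,1]} | b̂(t) − β(t) | ≤ c₁ · max_{1≤j≤T} | β̂_j − β(t_j) | + (1 + H) · 2K/(T−1); in particular the interpolation error term is of order K/T. -/
lemma lip_aux {β : ℝ → ℝ} {K : ℝ}
    (hβcont : ContinuousOn β (Set.Icc (-1:ℝ) 1))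
    (hβdiff : ∀ u ∈ Set.Ioo (-1:ℝ) 1, DifferentiableAt ℝ β u)
    (hK : ∀ u ∈ Set.Ioo (-1:ℝ) 1, |deriv β u| ≤ K) :
    ∀ a ∈ Set.Icc (-1:ℝ) 1, ∀ b ∈ Set.Icc (-1:ℝ) 1, a ≤ b → |β b - β a| ≤ K * (b - a) := by
  intro a ha b hb hab
  rcases eq_or_lt_of_le hab with rfl | hlt
  · simp
  · obtain ⟨c, hc, hderiv⟩ := exists_deriv_eq_slope β hlt
      (hβcont.mono (Set.Icc_subset_Icc ha.1 hb.2))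
      (fun u hu => (hβdiff u ⟨lt_of_le_of_lt ha.1 hu.1, lt_of_lt_of_le hu.2 hb.2⟩).differentiableWithinAt)
    have hcin : c ∈ Set.Ioo (-1:ℝ) 1 := ⟨lt_of_le_of_lt ha.1 hc.1, lt_of_lt_of_le hc.2 hb.2⟩
    have := hK c hcin
    rw [hderiv, abs_div, abs_of_pos (sub_pos.2 hlt)] at this
    calc |β b - β a| = |β b - β a| / (b - a) * (b - a) := by
          rw [div_mul_cancel₀]; linarith
      _ ≤ K * (b - a) := mul_le_mul_of_nonneg_right this (by linarith)

/-- **Theorem 6.** Quantitative uniform consistency of the interpolation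
estimator: with equidistant nodes `t_j = −1 + 2j/m` (`j = 0,…,m`, i.e. `T = m + 1` nodes)
and `β` continuous on `[−1,1]`, differentiable on `(−1,1)` with `|β′| ≤ K`, the
interpolant satisfies
`sup_{u∈[−1,1]} |b̂(u) − β(u)| ≤ c₁ max_j |β̂_j − β(t_j)| + (1 + H)·2K/m`;
in particular the interpolation error term is of order `K/T`. -/
theorem interpolation_uniform_consistency_quantitative
    {m : ℕ} (hm : 1 ≤ m)
    (t : Fin (m + 1) → ℝ)
    (ht : ∀ j : Fin (m + 1), t j = -1 + 2 * ((j : ℕ) : ℝ) / m)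
    (β : ℝ → ℝ) (βhat : Fin (m + 1) → ℝ) (βtilde bhat : ℝ → ℝ)
    (hβtilde : ∀ j, βtilde (t j) = β (t j))
    (hbhat : ∀ j, bhat (t j) = βhat j)
    (c₁ H : ℝ) (hc₁ : 0 ≤ c₁) (hH : 0 ≤ H)
    -- (i) stability
    (hstab : ∀ j : Fin m, ∀ u ∈ Set.Icc (t j.castSucc) (t j.succ),
      |bhat u - βtilde u|
        ≤ c₁ * max |βhat j.castSucc - β (t j.castSucc)| |βhat j.succ - β (t j.succ)|)
    -- (ii) local boundedness
    (hloc : ∀ j : Fin m, ∀ u ∈ Set.Icc (t j.castSucc) (t j.succ),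
      |βtilde u - β (t j.castSucc)|
        ≤ H * ⨆ v : Set.Icc (t j.castSucc) (t j.succ), |β ↑v - β (t j.castSucc)|)
    -- regularity of β
    (hβcont : ContinuousOn β (Set.Icc (-1:ℝ) 1))
    (hβdiff : ∀ u ∈ Set.Ioo (-1:ℝ) 1, DifferentiableAt ℝ β u)
    (K : ℝ) (hK : ∀ u ∈ Set.Ioo (-1:ℝ) 1, |deriv β u| ≤ K) :
    ∀ u ∈ Set.Icc (-1:ℝ) 1,
      |bhat u - β u|
        ≤ c₁ * (⨆ j : Fin (m + 1), |βhat j - β (t j)|) + (1 + H) * (2 * K / m) := by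
  intro u hu
  have hm0 : (0:ℝ) < m := by exact_mod_cast hm
  have lip := lip_aux hβcont hβdiff hK
  have hK0 : 0 ≤ K := le_trans (abs_nonneg _) (hK 0 (by norm_num))
  -- choose the interval index
  set x : ℝ := (u + 1) * m / 2 with hx
  have hx0 : 0 ≤ x := by
    have := hu.1
    rw [hx]
    apply div_nonneg _ (by norm_num)
    nlinarith
  have hxm : x ≤ m := by
    have := hu.2
    rw [hx]; nlinarith
  set jn : ℕ := min (Nat.floor x) (m - 1) with hjn
  have hjlt : jn < m := lt_of_le_of_lt (min_le_right _ _) (by omega)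
  set J : Fin m := ⟨jn, hjlt⟩ with hJ
  have hJc : ((J.castSucc : Fin (m+1)) : ℕ) = jn := rfl
  have hJs : ((J.succ : Fin (m+1)) : ℕ) = jn + 1 := rfl
  have hjx : (jn : ℝ) ≤ x := by
    have h1 : (jn : ℝ) ≤ (Nat.floor x : ℝ) := by exact_mod_cast min_le_left _ _
    exact le_trans h1 (Nat.floor_le hx0)
  have hxj : x ≤ (jn : ℝ) + 1 := by
    rcases le_or_gt (Nat.floor x) (m - 1) with h | h
    · have : jn = Nat.floor x := by omega
      rw [this]
      exact le_of_lt (Nat.lt_floor_add_one x)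
    · have : jn = m - 1 := by omega
      rw [this]
      have : ((m - 1 : ℕ) : ℝ) + 1 = (m : ℝ) := by
        have : (m:ℕ) - 1 + 1 = m := by omega
        exact_mod_cast congrArg (Nat.cast : ℕ → ℝ) this
      rw [this]; exact hxm
  -- endpoints
  have htc : t J.castSucc = -1 + 2 * (jn : ℝ) / m := by rw [ht]; norm_cast
  have hts : t J.succ = -1 + 2 * ((jn : ℝ) + 1) / m := by rw [ht, hJs]; push_cast; ring
  have hle1 : t J.castSucc ≤ u := by
    rw [htc]
    have : 2 * (jn : ℝ) / m ≤ u + 1 := by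
      rw [div_le_iff₀ hm0] at *
      nlinarith
    linarith
  have hle2 : u ≤ t J.succ := by
    rw [hts]
    have : u + 1 ≤ 2 * ((jn : ℝ) + 1) / m := by
      rw [le_div_iff₀ hm0]
      nlinarith
    linarith
  have huJ : u ∈ Set.Icc (t J.castSucc) (t J.succ) := ⟨hle1, hle2⟩
  have hsub : Set.Icc (t J.castSucc) (t J.succ) ⊆ Set.Icc (-1:ℝ) 1 := by
    apply Set.Icc_subset_Icc
    · have h0 : 0 ≤ 2 * (jn : ℝ) / m := by positivity
      rw [htc]; linarith
    · rw [hts]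
      have : 2 * ((jn : ℝ) + 1) / m ≤ 2 := by
        rw [div_le_iff₀ hm0]
        have : (jn : ℝ) + 1 ≤ (m : ℝ) := by exact_mod_cast hjlt
        nlinarith
      linarith
  have hwidth : t J.succ - t J.castSucc = 2 / m := by
    rw [htc, hts]; field_simp; ring
  -- interval Lipschitz bound
  have hβnear : ∀ v ∈ Set.Icc (t J.castSucc) (t J.succ), |β v - β (t J.castSucc)| ≤ K * (2 / m) := by
    intro v hv
    have := lip (t J.castSucc) (hsub ⟨le_refl _, by linarith [hwidth, div_nonneg (by norm_num : (0:ℝ) ≤ 2) hm0.le]⟩) v (hsub hv) hv.1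
    calc |β v - β (t J.castSucc)| ≤ K * (v - t J.castSucc) := this
      _ ≤ K * (2 / m) := by
          apply mul_le_mul_of_nonneg_left _ hK0
          linarith [hv.2, hwidth]
  -- sup over interval
  have hIne : Nonempty (Set.Icc (t J.castSucc) (t J.succ)) := ⟨⟨u, huJ⟩⟩
  have hsup : (⨆ v : Set.Icc (t J.castSucc) (t J.succ), |β ↑v - β (t J.castSucc)|) ≤ K * (2 / m) :=
    ciSup_le fun v => hβnear v v.2
  -- three-term split
  have h1 : |bhat u - βtilde u| ≤ c₁ * (⨆ j : Fin (m + 1), |βhat j - β (t j)|) := by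
    refine le_trans (hstab J u huJ) ?_
    apply mul_le_mul_of_nonneg_left _ hc₁
    apply max_le
    · exact le_ciSup (Set.Finite.bddAbove (Set.finite_range fun j : Fin (m+1) => |βhat j - β (t j)|)) J.castSucc
    · exact le_ciSup (Set.Finite.bddAbove (Set.finite_range fun j : Fin (m+1) => |βhat j - β (t j)|)) J.succ
  have h2 : |βtilde u - β (t J.castSucc)| ≤ H * (K * (2 / m)) :=
    le_trans (hloc J u huJ) (mul_le_mul_of_nonneg_left hsup hH)
  have h3 : |β (t J.castSucc) - β u| ≤ K * (2 / m) := by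
    rw [abs_sub_comm]
    exact hβnear u huJ
  have key : |bhat u - β u| ≤ |bhat u - βtilde u| + |βtilde u - β (t J.castSucc)| + |β (t J.castSucc) - β u| := by
    calc |bhat u - β u| = |(bhat u - βtilde u) + (βtilde u - β (t J.castSucc)) + (β (t J.castSucc) - β u)| := by ring_nf
      _ ≤ _ := by
          refine le_trans (abs_add_le _ _) ?_
          exact add_le_add (abs_add_le _ _) le_rfl
  have : (1 + H) * (2 * K / m) = K * (2 / m) + H * (K * (2 / m)) := by ring
  rw [this]
  linarith
end

section
/- (Identification in the staggered design.) Fix a treatment group g with P(G = g) > 0 and P(G = ∞) > 0, and an event time e. Assume groupwise no anticipation, E[Y(g, g) − Y(g, ∞) | G = g] = 0, and groupwise parallel trends, E[Y(g+e, ∞) − Y(g, ∞) | G = g] = E[Y(g+e, ∞) − Y(g, ∞) | G = ∞]. Then the group-specific ATT is identified by the group-specific DiD parameter: θ_{ATT,g}(e) = β_g(e), i.e., E[Y(g+e, g) − Y(g+e, ∞) | G = g] = E[Y(g+e) − Y(g) | G = g] − E[Y(g+e) − Y(g) | G = ∞]. -/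
open MeasureTheory ProbabilityTheory

/-! Under the conditional law of group `k`, the observed outcome `Y(t)` equals `Y(t, k)` almost
surely, so both DiD terms are means of potential outcomes. For the treated group,
`Y(g+e, g) - Y(g, g)` is the effect `Y(g+e, g) - Y(g+e, ∞)`, plus the untreated trend
`Y(g+e, ∞) - Y(g, ∞)`, minus the anticipation gap `Y(g, g) - Y(g, ∞)`; the gap has mean zero and,
by parallel trends, the trend has the same mean as in the never-treated group. -/

section

variable {Ω : Type*} [MeasurableSpace Ω]

theorem integral_cond_congr {E : Type*} [NormedAddCommGroup E] [NormedSpace ℝ E]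
    {μ : Measure Ω} {s : Set Ω} (hs : MeasurableSet s) {f f' : Ω → E} (h : Set.EqOn f f' s) :
    ∫ ω, f ω ∂μ[|s] = ∫ ω, f' ω ∂μ[|s] :=
  integral_congr_ae ((ae_cond_mem hs).mono fun _ hω => h hω)

theorem integral_sub_eq_did_of_parallel_trends {μ ν : Measure Ω} {Y₀ Y₁ Z₀ Z₁ : Ω → ℝ}
    (hY₀ : Integrable Y₀ μ) (hY₁ : Integrable Y₁ μ) (hZ₀ : Integrable Z₀ μ)
    (hZ₁ : Integrable Z₁ μ)
    (hNA : ∫ ω, (Y₀ ω - Z₀ ω) ∂μ = 0)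
    (hPT : ∫ ω, (Z₁ ω - Z₀ ω) ∂μ = ∫ ω, (Z₁ ω - Z₀ ω) ∂ν) :
    ∫ ω, (Y₁ ω - Z₁ ω) ∂μ = (∫ ω, (Y₁ ω - Y₀ ω) ∂μ) - ∫ ω, (Z₁ ω - Z₀ ω) ∂ν := by
  rw [← hPT, integral_sub hY₁ hZ₁, integral_sub hY₁ hY₀, integral_sub hZ₁ hZ₀]
  rw [integral_sub hY₀ hZ₀] at hNA
  linarith

end

theorem staggered_did_identification_general
    {Ω γ : Type*} [MeasurableSpace Ω] [MeasurableSpace γ] [MeasurableSingletonClass γ]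
    (P : Measure Ω)
    (G : Ω → γ) (hG : Measurable G)
    (g inf : γ)
    (gt e : ℝ)
    (Ypot : ℝ → γ → Ω → ℝ)
    (hint : ∀ s ∈ ({gt, gt + e} : Set ℝ), ∀ k ∈ ({g, inf} : Set γ),
      Integrable (Ypot s k) (P[|{ω | G ω = g}])
        ∧ Integrable (Ypot s k) (P[|{ω | G ω = inf}]))
    (Yobs : ℝ → Ω → ℝ) (hYobs : ∀ s ω, Yobs s ω = Ypot s (G ω) ω)
    -- groupwise no anticipation
    (hNA : (∫ ω, (Ypot gt g ω - Ypot gt inf ω) ∂(P[|{ω | G ω = g}])) = 0)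
    -- groupwise parallel trends
    (hPT : (∫ ω, (Ypot (gt + e) inf ω - Ypot gt inf ω) ∂(P[|{ω | G ω = g}]))
      = ∫ ω, (Ypot (gt + e) inf ω - Ypot gt inf ω) ∂(P[|{ω | G ω = inf}])) :
    (∫ ω, (Ypot (gt + e) g ω - Ypot (gt + e) inf ω) ∂(P[|{ω | G ω = g}]))
      = (∫ ω, (Yobs (gt + e) ω - Yobs gt ω) ∂(P[|{ω | G ω = g}]))
        - ∫ ω, (Yobs (gt + e) ω - Yobs gt ω) ∂(P[|{ω | G ω = inf}]) := by
  have hobs : ∀ k, ∫ ω, (Yobs (gt + e) ω - Yobs gt ω) ∂(P[|{ω | G ω = k}])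
      = ∫ ω, (Ypot (gt + e) k ω - Ypot gt k ω) ∂(P[|{ω | G ω = k}]) := fun k =>
    integral_cond_congr (hG (measurableSet_singleton k)) fun ω (hω : G ω = k) => by
      simp only [hYobs, hω]
  rw [hobs, hobs]
  exact integral_sub_eq_did_of_parallel_trends (hint gt (by simp) g (by simp)).1
    (hint (gt + e) (by simp) g (by simp)).1 (hint gt (by simp) inf (by simp)).1
    (hint (gt + e) (by simp) inf (by simp)).1 hNA hPT

/-- Identification in the staggered design: under groupwise no
anticipation and groupwise parallel trends, the group-specific ATT is identified by the
group-specific DiD parameter, `θ_{ATT,g}(e) = β_g(e)`. Here `γ` is the type of group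
labels, `g` the treatment group under consideration (with reference period `gt`), and
`inf` the never-treated label. -/
theorem staggered_did_identification
    {Ω γ : Type*} [MeasurableSpace Ω] [MeasurableSpace γ] [MeasurableSingletonClass γ]
    (P : Measure Ω) [IsProbabilityMeasure P]
    (G : Ω → γ) (hG : Measurable G)
    (g inf : γ) (hginf : g ≠ inf)
    (hPg : 0 < P {ω | G ω = g}) (hPinf : 0 < P {ω | G ω = inf})
    (gt e : ℝ)
    (Ypot : ℝ → γ → Ω → ℝ)
    (hint : ∀ s ∈ ({gt, gt + e} : Set ℝ), ∀ k ∈ ({g, inf} : Set γ),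
      Integrable (Ypot s k) (P[|{ω | G ω = g}])
        ∧ Integrable (Ypot s k) (P[|{ω | G ω = inf}]))
    (Yobs : ℝ → Ω → ℝ) (hYobs : ∀ s ω, Yobs s ω = Ypot s (G ω) ω)
    -- groupwise no anticipation
    (hNA : (∫ ω, (Ypot gt g ω - Ypot gt inf ω) ∂(P[|{ω | G ω = g}])) = 0)
    -- groupwise parallel trends
    (hPT : (∫ ω, (Ypot (gt + e) inf ω - Ypot gt inf ω) ∂(P[|{ω | G ω = g}]))
      = ∫ ω, (Ypot (gt + e) inf ω - Ypot gt inf ω) ∂(P[|{ω | G ω = inf}])) :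
    (∫ ω, (Ypot (gt + e) g ω - Ypot (gt + e) inf ω) ∂(P[|{ω | G ω = g}]))
      = (∫ ω, (Yobs (gt + e) ω - Yobs gt ω) ∂(P[|{ω | G ω = g}]))
        - ∫ ω, (Yobs (gt + e) ω - Yobs gt ω) ∂(P[|{ω | G ω = inf}]) :=
  staggered_did_identification_general P G hG g inf gt e Ypot hint Yobs hYobs hNA hPT
end
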